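/- Let n ≥ 2 and let A be an n×n row-stochastic strictly diagonally dominant positive real matrix. If (c_min(A) − 1)/(n−1)² ≥ 2^{2n·log₂(n)/σ_min(A)}, then the channel capacity equals the closed-form expression: C(A) = U(A). -/

import Mathlib

open Matrix Finset Real

noncomputable def rowEntropy {n : ℕ} (A : Matrix (Fin n) (Fin n) ℝ) (i : Fin n) : ℝ :=
  -∑ k, A i k * Real.logb 2 (A i k)

noncomputable def Kvec {n : ℕ} (A : Matrix (Fin n) (Fin n) ℝ) (j : Fin n) : ℝ :=
  ∑ i, A⁻¹ j i * rowEntropy A i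

noncomputable def Kmax {n : ℕ} (A : Matrix (Fin n) (Fin n) ℝ) : ℝ := ⨆ j, Kvec A j

noncomputable def Kmin {n : ℕ} (A : Matrix (Fin n) (Fin n) ℝ) : ℝ := ⨅ j, Kvec A j

def IsPmf {n : ℕ} (p : Fin n → ℝ) : Prop := (∀ i, 0 ≤ p i) ∧ ∑ i, p i = 1

noncomputable def mutualInfo {n : ℕ} (A : Matrix (Fin n) (Fin n) ℝ) (p : Fin n → ℝ) : ℝ :=
  -(∑ j, Aᵀ.mulVec p j * Real.logb 2 (Aᵀ.mulVec p j))
    + ∑ i, ∑ j, p i * A i j * Real.logb 2 (A i j)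

noncomputable def capacity {n : ℕ} (A : Matrix (Fin n) (Fin n) ℝ) : ℝ :=
  sSup {x : ℝ | ∃ p : Fin n → ℝ, IsPmf p ∧ mutualInfo A p = x}

noncomputable def qStar {n : ℕ} (A : Matrix (Fin n) (Fin n) ℝ) (j : Fin n) : ℝ :=
  (2 : ℝ) ^ (-Kvec A j) / ∑ i, (2 : ℝ) ^ (-Kvec A i)

noncomputable def pStar {n : ℕ} (A : Matrix (Fin n) (Fin n) ℝ) : Fin n → ℝ :=
  (A⁻¹)ᵀ.mulVec (qStar A)

noncomputable def Ubound {n : ℕ} (A : Matrix (Fin n) (Fin n) ℝ) : ℝ :=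
  -(∑ j, qStar A j * Real.logb 2 (qStar A j))
    + ∑ i, ∑ j, pStar A i * A i j * Real.logb 2 (A i j)

noncomputable def cmin {n : ℕ} (A : Matrix (Fin n) (Fin n) ℝ) : ℝ :=
  ⨅ i, A i i / ∑ j ∈ Finset.univ.erase i, |A i j|

noncomputable def Hmax {n : ℕ} (A : Matrix (Fin n) (Fin n) ℝ) : ℝ := ⨆ i, rowEntropy A i

noncomputable def sigmaMin {n : ℕ} (A : Matrix (Fin n) (Fin n) ℝ) : ℝ :=
  Real.sqrt (⨅ i, (Matrix.isHermitian_conjTranspose_mul_self A).eigenvalues i)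

def RowStochastic {n : ℕ} (A : Matrix (Fin n) (Fin n) ℝ) : Prop :=
  (∀ i j, 0 ≤ A i j) ∧ ∀ i, ∑ j, A i j = 1

def SDDPos {n : ℕ} (A : Matrix (Fin n) (Fin n) ℝ) : Prop :=
  (∀ i j, 0 < A i j) ∧ ∀ i, ∑ j ∈ Finset.univ.erase i, A i j < A i i

/-!
For every input law `p`, writing `y = Aᵀ p` and using `A K = (H(A_i))_i`, one has
`I_A(p) = log₂ Σ_j 2^{-K_j} - D(y ‖ q*)`, so Gibbs' inequality bounds the capacity by
`log₂ Σ_j 2^{-K_j}`; this value is `U(A)`, attained at `p*` because `Aᵀ p* = q*`. It remains to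
see that `p*` is a probability vector. Its entries sum to one since `A⁻¹` inherits the unit row
sums of `A`. For the signs, strict diagonal dominance makes the diagonal entry of each column of
`A⁻¹` positive and larger than `c_min` times every other entry of that column, while
`|A⁻¹_{ij}| ≤ 1/σ_min` and `0 ≤ H(A_i) ≤ log₂ n` give `|K_j| ≤ n log₂ n / σ_min`, hence
`q*_j ≤ 2^{2n log₂ n/σ_min} q*_i`. The hypothesis then makes the diagonal term of
`p*_i = Σ_j A⁻¹_{ji} q*_j` dominate the sum of the others.
-/

theorem sum_mul_log_le_sum_mul_log {ι : Type*} [Fintype ι] {p q : ι → ℝ} (hp : ∀ i, 0 ≤ p i)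
    (hq : ∀ i, 0 < q i) (hp1 : ∑ i, p i = 1) (hq1 : ∑ i, q i ≤ 1) :
    ∑ i, p i * log (q i) ≤ ∑ i, p i * log (p i) := by
  have hterm : ∀ i, p i * log (q i) - p i * log (p i) ≤ q i - p i := by
    intro i
    rcases (hp i).eq_or_lt with h | h
    · simp [← h, (hq i).le]
    · calc p i * log (q i) - p i * log (p i) = p i * log (q i / p i) := by
            rw [log_div (hq i).ne' h.ne']; ring
        _ ≤ p i * (q i / p i - 1) := by gcongr; exact log_le_sub_one_of_pos (div_pos (hq i) h)
        _ = q i - p i := by field_simp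
  have := sum_le_sum fun i (_ : i ∈ univ) => hterm i
  rw [sum_sub_distrib, sum_sub_distrib, hp1] at this
  linarith

theorem sum_mul_logb_le_sum_mul_logb {ι : Type*} [Fintype ι] {b : ℝ} (hb : 1 < b) {p q : ι → ℝ}
    (hp : ∀ i, 0 ≤ p i) (hq : ∀ i, 0 < q i) (hp1 : ∑ i, p i = 1) (hq1 : ∑ i, q i ≤ 1) :
    ∑ i, p i * logb b (q i) ≤ ∑ i, p i * logb b (p i) := by
  simp only [logb, ← mul_div_assoc, ← sum_div]
  exact div_le_div_of_nonneg_right (sum_mul_log_le_sum_mul_log hp hq hp1 hq1) (log_pos hb).le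

theorem Matrix.IsHermitian.iInf_eigenvalues_mul_dotProduct_le {ι : Type*} [Fintype ι]
    [DecidableEq ι] {H : Matrix ι ι ℝ} (hH : H.IsHermitian) (x : ι → ℝ) :
    (⨅ i, hH.eigenvalues i) * (x ⬝ᵥ x) ≤ x ⬝ᵥ (H *ᵥ x) := by
  set c := ⨅ i, hH.eigenvalues i
  set U := hH.eigenvectorUnitary
  have hshift :
      H - c • 1 = Unitary.conjStarAlgAut ℝ _ U (diagonal fun i => hH.eigenvalues i - c) := by
    conv_lhs => rw [hH.spectral_theorem]
    rw [← map_one (Unitary.conjStarAlgAut ℝ _ U), ← map_smul, ← map_sub, smul_one_eq_diagonal,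
      diagonal_sub]
    rfl
  have hpsd : (H - c • 1).PosSemidef := by
    rw [hshift, Unitary.conjStarAlgAut_apply,
      Unitary.isUnit_coe.posSemidef_star_right_conjugate_iff, posSemidef_diagonal_iff]
    exact fun i => sub_nonneg.2 (ciInf_le (Set.finite_range _).bddBelow i)
  have := hpsd.dotProduct_mulVec_nonneg x
  simp only [star_trivial, sub_mulVec, dotProduct_sub, smul_mulVec, one_mulVec,
    dotProduct_smul, smul_eq_mul] at this
  linarith

theorem Matrix.iInf_eigenvalues_conjTranspose_mul_self_pos {ι : Type*} [Fintype ι] [Nonempty ι]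
    [DecidableEq ι] {A : Matrix ι ι ℝ} (hA : A.det ≠ 0) :
    0 < ⨅ i, (isHermitian_conjTranspose_mul_self A).eigenvalues i := by
  have hpd := PosDef.conjTranspose_mul_self A
    (mulVec_injective_iff_isUnit.2 ((isUnit_iff_isUnit_det A).2 hA.isUnit))
  obtain ⟨i, hi⟩ :=
    exists_eq_ciInf_of_finite (f := (isHermitian_conjTranspose_mul_self A).eigenvalues)
  exact hi ▸ hpd.eigenvalues_pos i

theorem Matrix.mulVec_col_inv {ι : Type*} [Fintype ι] [DecidableEq ι] {A : Matrix ι ι ℝ}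
    (hA : IsUnit A.det) (i : ι) : A *ᵥ A⁻¹.col i = Pi.single i 1 := by
  rw [← mulVec_single_one, mulVec_mulVec, mul_nonsing_inv A hA, one_mulVec]

theorem Matrix.abs_mulVec_apply_sub_diag_le {ι : Type*} [Fintype ι] [DecidableEq ι]
    {A : Matrix ι ι ℝ} {j : ι} (hA : ∀ k, 0 ≤ A j k) (x : ι → ℝ) :
    |(A *ᵥ x) j - A j j * x j| ≤ (∑ k ∈ univ.erase j, A j k) * ‖x‖ := by
  rw [mulVec, dotProduct, ← add_sum_erase _ _ (mem_univ j), add_sub_cancel_left, sum_mul]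
  refine (abs_sum_le_sum_abs _ _).trans (sum_le_sum fun k _ => ?_)
  rw [abs_mul, abs_of_nonneg (hA k)]
  exact mul_le_mul_of_nonneg_left (norm_le_pi_norm x k) (hA k)

theorem sum_mul_nonneg_of_abs_le {ι : Type*} [Fintype ι] [DecidableEq ι] {a q : ι → ℝ} {c : ℝ}
    {i : ι} (hc : 0 < c) (hai : 0 ≤ a i) (ha : ∀ j ≠ i, c * |a j| ≤ a i) (hq : ∀ j, 0 ≤ q j)
    (hqi : ∑ j ∈ univ.erase i, q j ≤ c * q i) :
    0 ≤ ∑ j, a j * q j := by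
  have hterm : ∀ j ∈ univ.erase i, -(a i * q j) ≤ c * (a j * q j) := fun j hj =>
    calc -(a i * q j) ≤ -(c * |a j| * q j) :=
          neg_le_neg (mul_le_mul_of_nonneg_right (ha j (ne_of_mem_erase hj)) (hq j))
      _ = c * (-|a j| * q j) := by ring
      _ ≤ c * (a j * q j) :=
          mul_le_mul_of_nonneg_left (mul_le_mul_of_nonneg_right (neg_abs_le _) (hq j)) hc.le
  have := sum_le_sum hterm
  rw [sum_neg_distrib, ← mul_sum, ← mul_sum] at this
  rw [← add_sum_erase _ _ (mem_univ i)]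
  nlinarith [mul_le_mul_of_nonneg_left hqi hai]

namespace RowStochastic

variable {n : ℕ} {A : Matrix (Fin n) (Fin n) ℝ}

theorem le_one (hA : RowStochastic A) (i j : Fin n) : A i j ≤ 1 :=
  hA.2 i ▸ single_le_sum (fun k _ => hA.1 i k) (mem_univ j)

theorem rowEntropy_nonneg (hA : RowStochastic A) (i : Fin n) : 0 ≤ rowEntropy A i :=
  neg_nonneg.2 <| sum_nonpos fun k _ =>
    mul_nonpos_of_nonneg_of_nonpos (hA.1 i k) (logb_nonpos one_lt_two (hA.1 i k) (hA.le_one i k))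

theorem rowEntropy_le_logb (hA : RowStochastic A) (i : Fin n) : rowEntropy A i ≤ logb 2 n := by
  have hn : (0 : ℝ) < n := Nat.cast_pos.2 (Fin.pos i)
  have := sum_mul_logb_le_sum_mul_logb one_lt_two (hA.1 i) (fun _ => inv_pos.2 hn) (hA.2 i)
    (by simp [hn.ne'])
  simp only [logb_inv, mul_neg, sum_neg_distrib, ← sum_mul, hA.2 i, one_mul] at this
  rw [rowEntropy]
  linarith

theorem abs_rowEntropy_le_logb (hA : RowStochastic A) (i : Fin n) :
    |rowEntropy A i| ≤ logb 2 n :=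
  (abs_of_nonneg (hA.rowEntropy_nonneg i)).trans_le (hA.rowEntropy_le_logb i)

end RowStochastic

section SingularValue

variable {n : ℕ} {A : Matrix (Fin n) (Fin n) ℝ}

theorem sigmaMin_pos [NeZero n] (hA : IsUnit A.det) : 0 < sigmaMin A :=
  sqrt_pos.2 (iInf_eigenvalues_conjTranspose_mul_self_pos hA.ne_zero)

theorem abs_inv_apply_le_inv_sigmaMin (hA : IsUnit A.det) (i j : Fin n) :
    |A⁻¹ i j| ≤ (sigmaMin A)⁻¹ := by
  have : NeZero n := ⟨i.pos.ne'⟩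
  set x := A⁻¹.col j
  have hquad : x ⬝ᵥ ((Aᴴ * A) *ᵥ x) = 1 := by
    rw [← mulVec_mulVec, dotProduct_mulVec, conjTranspose_eq_transpose_of_trivial,
      vecMul_transpose, mulVec_col_inv hA, single_dotProduct, Pi.single_eq_same, one_mul]
  have hray := (isHermitian_conjTranspose_mul_self A).iInf_eigenvalues_mul_dotProduct_le x
  rw [hquad, ← sq_sqrt (iInf_eigenvalues_conjTranspose_mul_self_pos hA.ne_zero).le] at hray
  have hxi : x i ^ 2 ≤ x ⬝ᵥ x :=
    (sq _).trans_le <| single_le_sum (f := fun k => x k * x k) (fun k _ => mul_self_nonneg _)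
      (mem_univ i)
  rw [← col_apply A⁻¹ j i, inv_eq_one_div (sigmaMin A), le_div_iff₀' (sigmaMin_pos hA),
    ← abs_of_pos (sigmaMin_pos hA), ← abs_mul, ← sq_le_one_iff_abs_le_one, mul_pow]
  exact (mul_le_mul_of_nonneg_left hxi (sq_nonneg _)).trans hray

end SingularValue

section Kvec

variable {n : ℕ} {A : Matrix (Fin n) (Fin n) ℝ}

theorem abs_Kvec_le (hst : RowStochastic A) (hA : IsUnit A.det) (j : Fin n) :
    |Kvec A j| ≤ n / sigmaMin A * logb 2 n := by
  calc |Kvec A j| ≤ ∑ i, |A⁻¹ j i| * |rowEntropy A i| := by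
        simpa only [Kvec, abs_mul] using abs_sum_le_sum_abs (fun i => A⁻¹ j i * rowEntropy A i) univ
    _ ≤ ∑ _i : Fin n, (sigmaMin A)⁻¹ * logb 2 n := by
        exact sum_le_sum fun i _ => mul_le_mul (abs_inv_apply_le_inv_sigmaMin hA j i)
          (hst.abs_rowEntropy_le_logb i) (abs_nonneg _) (inv_nonneg.2 (sqrt_nonneg _))
    _ = n / sigmaMin A * logb 2 n := by simp [div_eq_mul_inv, mul_assoc]

theorem qStar_nonneg (j : Fin n) : 0 ≤ qStar A j := by unfold qStar; positivity

theorem qStar_pos [NeZero n] (j : Fin n) : 0 < qStar A j := by unfold qStar; positivity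

theorem sum_qStar [NeZero n] : ∑ j, qStar A j = 1 := by
  simp only [qStar, ← sum_div]
  exact div_self (by positivity)

theorem logb_qStar [NeZero n] (j : Fin n) :
    logb 2 (qStar A j) = -Kvec A j - logb 2 (∑ i, (2 : ℝ) ^ (-Kvec A i)) := by
  rw [qStar, logb_div (by positivity) (by positivity), logb_rpow two_pos (by norm_num)]

theorem qStar_le_mul_qStar (hst : RowStochastic A) (hA : IsUnit A.det) (i j : Fin n) :
    qStar A j ≤ (2 : ℝ) ^ (2 * (n : ℝ) * logb 2 n / sigmaMin A) * qStar A i := by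
  have hK : Kvec A i - Kvec A j ≤ 2 * (n : ℝ) * logb 2 n / sigmaMin A := by
    have hi := abs_le.1 (abs_Kvec_le hst hA i)
    have hj := abs_le.1 (abs_Kvec_le hst hA j)
    calc Kvec A i - Kvec A j ≤ 2 * (n / sigmaMin A * logb 2 n) := by linarith
      _ = 2 * (n : ℝ) * logb 2 n / sigmaMin A := by ring
  rw [qStar, qStar, ← mul_div_assoc]
  gcongr ?_ / _
  calc (2 : ℝ) ^ (-Kvec A j) = 2 ^ (Kvec A i - Kvec A j) * 2 ^ (-Kvec A i) := by
        rw [← rpow_add two_pos]; ring_nf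
    _ ≤ _ := by gcongr; norm_num

end Kvec

section MutualInfo

variable {n : ℕ} {A : Matrix (Fin n) (Fin n) ℝ}

theorem IsPmf.transpose_mulVec (hst : RowStochastic A) {p : Fin n → ℝ} (hp : IsPmf p) :
    IsPmf (Aᵀ *ᵥ p) := by
  refine ⟨fun j => dotProduct_nonneg_of_nonneg (fun i => hst.1 i j) hp.1, ?_⟩
  rw [← one_dotProduct, mulVec_transpose, dotProduct_comm, ← dotProduct_mulVec]
  simp [mulVec, dotProduct, hst.2, hp.2]

theorem transpose_mulVec_dotProduct_Kvec (hA : IsUnit A.det) (p : Fin n → ℝ) :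
    (Aᵀ *ᵥ p) ⬝ᵥ Kvec A = p ⬝ᵥ rowEntropy A := by
  rw [mulVec_transpose, ← dotProduct_mulVec]
  change p ⬝ᵥ (A *ᵥ (A⁻¹ *ᵥ rowEntropy A)) = _
  rw [mulVec_mulVec, mul_nonsing_inv A hA, one_mulVec]

theorem mutualInfo_eq_logb_sum_add [NeZero n] (hA : IsUnit A.det) (p : Fin n → ℝ) :
    mutualInfo A p = (∑ j, (Aᵀ *ᵥ p) j) * logb 2 (∑ i, (2 : ℝ) ^ (-Kvec A i))
      + (∑ j, (Aᵀ *ᵥ p) j * logb 2 (qStar A j) - ∑ j, (Aᵀ *ᵥ p) j * logb 2 ((Aᵀ *ᵥ p) j)) := by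
  have hent : ∑ i, ∑ j, p i * A i j * logb 2 (A i j) = -(p ⬝ᵥ rowEntropy A) := by
    simp only [dotProduct, rowEntropy, mul_neg, sum_neg_distrib, neg_neg, mul_sum,
      mul_assoc]
  simp only [logb_qStar, mul_sub, mul_neg, sum_sub_distrib, sum_neg_distrib,
    ← sum_mul]
  rw [mutualInfo, hent, ← transpose_mulVec_dotProduct_Kvec hA, dotProduct]
  ring

theorem mutualInfo_le_logb_sum [NeZero n] (hst : RowStochastic A) (hA : IsUnit A.det)
    {p : Fin n → ℝ} (hp : IsPmf p) :
    mutualInfo A p ≤ logb 2 (∑ i, (2 : ℝ) ^ (-Kvec A i)) := by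
  have hy := hp.transpose_mulVec hst
  have := sum_mul_logb_le_sum_mul_logb one_lt_two hy.1 (qStar_pos (A := A)) hy.2
    sum_qStar.le
  rw [mutualInfo_eq_logb_sum_add hA, hy.2]
  linarith

theorem transpose_mulVec_pStar (hA : IsUnit A.det) : Aᵀ *ᵥ pStar A = qStar A := by
  rw [pStar, mulVec_mulVec, ← transpose_mul, nonsing_inv_mul A hA, transpose_one, one_mulVec]

theorem mutualInfo_pStar [NeZero n] (hA : IsUnit A.det) :
    mutualInfo A (pStar A) = logb 2 (∑ i, (2 : ℝ) ^ (-Kvec A i)) := by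
  rw [mutualInfo_eq_logb_sum_add hA, transpose_mulVec_pStar hA, sum_qStar]
  ring

theorem mutualInfo_pStar_eq_Ubound (hA : IsUnit A.det) : mutualInfo A (pStar A) = Ubound A := by
  rw [mutualInfo, Ubound, transpose_mulVec_pStar hA]

theorem sum_pStar [NeZero n] (hst : RowStochastic A) (hA : IsUnit A.det) : ∑ i, pStar A i = 1 := by
  have hA1 : A *ᵥ 1 = 1 := funext fun i => by simp [mulVec, dotProduct, hst.2 i]
  have hinv1 : A⁻¹ *ᵥ 1 = 1 := by
    rw [← hA1, mulVec_mulVec, nonsing_inv_mul A hA, one_mulVec, hA1]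
  rw [← one_dotProduct, pStar, mulVec_transpose, dotProduct_comm, ← dotProduct_mulVec, hinv1,
    dotProduct_one, sum_qStar]

end MutualInfo

namespace SDDPos

variable {n : ℕ} {A : Matrix (Fin n) (Fin n) ℝ}

theorem isUnit_det (hA : SDDPos A) : IsUnit A.det :=
  (det_ne_zero_of_sum_row_lt_diag fun k => by
    simpa [abs_of_pos (hA.1 _ _)] using hA.2 k).isUnit

theorem sum_erase_pos (hn : 2 ≤ n) (hA : SDDPos A) (i : Fin n) :
    0 < ∑ j ∈ univ.erase i, A i j := by
  have : Nontrivial (Fin n) := Fin.nontrivial_iff_two_le.2 hn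
  obtain ⟨j, hj⟩ := exists_ne i
  exact sum_pos (fun k _ => hA.1 i k) ⟨j, mem_erase.2 ⟨hj, mem_univ j⟩⟩

theorem cmin_mul_sum_erase_le (hn : 2 ≤ n) (hA : SDDPos A) (i : Fin n) :
    cmin A * ∑ j ∈ univ.erase i, A i j ≤ A i i := by
  have hle : cmin A ≤ A i i / ∑ j ∈ univ.erase i, |A i j| :=
    ciInf_le (Set.finite_range _).bddBelow i
  simp only [abs_of_pos (hA.1 i _)] at hle
  rwa [le_div_iff₀ (hA.sum_erase_pos hn i)] at hle

theorem one_lt_cmin (hn : 2 ≤ n) (hA : SDDPos A) : 1 < cmin A := by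
  have : NeZero n := ⟨by omega⟩
  obtain ⟨i, hi⟩ := exists_eq_ciInf_of_finite
    (f := fun i : Fin n => A i i / ∑ j ∈ univ.erase i, |A i j|)
  rw [cmin, ← hi]
  simp only [abs_of_pos (hA.1 i _)]
  exact (one_lt_div (hA.sum_erase_pos hn i)).2 (hA.2 i)

theorem cmin_mul_abs_inv_apply_le_norm (hn : 2 ≤ n) (hA : SDDPos A) {i j : Fin n} (hji : j ≠ i) :
    cmin A * |A⁻¹ j i| ≤ ‖A⁻¹.col i‖ := by
  have hrow := abs_mulVec_apply_sub_diag_le (fun k => (hA.1 j k).le) (A⁻¹.col i)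
  rw [mulVec_col_inv hA.isUnit_det, Pi.single_eq_of_ne hji, zero_sub, abs_neg, abs_mul,
    abs_of_pos (hA.1 j j)] at hrow
  have hR := hA.sum_erase_pos hn j
  have := mul_le_mul_of_nonneg_right (hA.cmin_mul_sum_erase_le hn j) (abs_nonneg (A⁻¹ j i))
  refine le_of_mul_le_mul_left ?_ hR
  calc (∑ k ∈ univ.erase j, A j k) * (cmin A * |A⁻¹ j i|) ≤ A j j * |A⁻¹ j i| := by linarith
    _ ≤ _ := hrow

theorem norm_col_inv_le (hn : 2 ≤ n) (hA : SDDPos A) (i : Fin n) :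
    ‖A⁻¹.col i‖ ≤ |A⁻¹ i i| := by
  by_contra! hlt
  have hc := hA.one_lt_cmin hn
  have hpos : 0 < ‖A⁻¹.col i‖ := (abs_nonneg _).trans_lt hlt
  refine lt_irrefl _ ((pi_norm_lt_iff hpos).2 fun k => ?_)
  rw [Real.norm_eq_abs, col_apply]
  rcases eq_or_ne k i with rfl | hk
  · exact hlt
  · nlinarith [hA.cmin_mul_abs_inv_apply_le_norm hn hk, abs_nonneg (A⁻¹ k i)]

theorem inv_apply_self_pos (hn : 2 ≤ n) (hA : SDDPos A) (i : Fin n) : 0 < A⁻¹ i i := by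
  have hrow := abs_mulVec_apply_sub_diag_le (fun k => (hA.1 i k).le) (A⁻¹.col i)
  rw [mulVec_col_inv hA.isUnit_det, Pi.single_eq_same, col_apply] at hrow
  by_contra! hle
  have hnorm := hA.norm_col_inv_le hn i
  rw [abs_of_nonpos hle] at hnorm
  nlinarith [(le_abs_self _).trans hrow, hA.2 i,
    mul_nonpos_of_nonneg_of_nonpos (sub_pos.2 (hA.2 i)).le hle,
    mul_le_mul_of_nonneg_left hnorm (hA.sum_erase_pos hn i).le]

theorem cmin_mul_abs_inv_apply_le (hn : 2 ≤ n) (hA : SDDPos A) {i j : Fin n} (hji : j ≠ i) :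
    cmin A * |A⁻¹ j i| ≤ A⁻¹ i i :=
  (hA.cmin_mul_abs_inv_apply_le_norm hn hji).trans <|
    (hA.norm_col_inv_le hn i).trans (abs_of_pos (hA.inv_apply_self_pos hn i)).le

end SDDPos

section Capacity

variable {n : ℕ} {A : Matrix (Fin n) (Fin n) ℝ}

theorem pStar_nonneg (hn : 2 ≤ n) (hA : SDDPos A)
    (hq : ∀ i, ∑ j ∈ univ.erase i, qStar A j ≤ cmin A * qStar A i) (i : Fin n) :
    0 ≤ pStar A i :=
  sum_mul_nonneg_of_abs_le (a := fun j => A⁻¹ j i) (zero_lt_one.trans (hA.one_lt_cmin hn))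
    (hA.inv_apply_self_pos hn i).le (fun _ => hA.cmin_mul_abs_inv_apply_le hn) qStar_nonneg
    (hq i)

theorem sum_erase_qStar_le_cmin_mul (hn : 2 ≤ n) (hst : RowStochastic A) (hA : SDDPos A)
    (hcond : (2 : ℝ) ^ (2 * (n : ℝ) * logb 2 n / sigmaMin A) ≤ (cmin A - 1) / ((n : ℝ) - 1) ^ 2)
    (i : Fin n) :
    ∑ j ∈ univ.erase i, qStar A j ≤ cmin A * qStar A i := by
  have hn1 : (1 : ℝ) ≤ n - 1 := by
    have : (2 : ℝ) ≤ n := by exact_mod_cast hn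
    linarith
  have hc := hA.one_lt_cmin hn
  have hqi := qStar_nonneg (A := A) i
  calc ∑ j ∈ univ.erase i, qStar A j
      ≤ (univ.erase i).card • ((cmin A - 1) / ((n : ℝ) - 1) ^ 2 * qStar A i) :=
        sum_le_card_nsmul _ _ _ fun j _ => (qStar_le_mul_qStar hst hA.isUnit_det i j).trans
          (mul_le_mul_of_nonneg_right hcond hqi)
    _ = (cmin A - 1) / ((n : ℝ) - 1) * qStar A i := by
        rw [card_erase_of_mem (mem_univ i), card_univ, Fintype.card_fin, nsmul_eq_mul,
          Nat.cast_pred (by omega)]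
        field_simp
    _ ≤ (cmin A - 1) * qStar A i := by
        gcongr
        exact div_le_self (by linarith) hn1
    _ ≤ cmin A * qStar A i := by linarith

end Capacity

theorem capacity_eq_Ubound_of_simple_cond {n : ℕ} (hn : 2 ≤ n)
    (A : Matrix (Fin n) (Fin n) ℝ) (hst : RowStochastic A) (hA : SDDPos A)
    (hcond : (2 : ℝ) ^ (2 * (n : ℝ) * Real.logb 2 (n : ℝ) / sigmaMin A) ≤
        (cmin A - 1) / ((n : ℝ) - 1) ^ 2) :
    capacity A = Ubound A := by
  have : NeZero n := ⟨by omega⟩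
  have hdet := hA.isUnit_det
  have hpStar : IsPmf (pStar A) :=
    ⟨pStar_nonneg hn hA (sum_erase_qStar_le_cmin_mul hn hst hA hcond), sum_pStar hst hdet⟩
  rw [capacity, ← mutualInfo_pStar_eq_Ubound hdet]
  refine IsGreatest.csSup_eq ⟨⟨pStar A, hpStar, rfl⟩, ?_⟩
  rintro _ ⟨p, hp, rfl⟩
  exact (mutualInfo_le_logb_sum hst hdet hp).trans_eq (mutualInfo_pStar hdet).symm
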